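/- Let q ≥ 1 and X = Fin q ⊕ Fin q, and let δ be the transverse pairing with δ (inl i) = inr i for every i. Then for all pairings α and β of X: b_R(β) ≤ |δ∘α| + |α∘β|. -/

import Mathlib

/-- Number of cycles (orbits of the generated cyclic group, fixed points included). -/
noncomputable def permCycles {X : Type*} (σ : Equiv.Perm X) : ℕ :=
  Nat.card (MulAction.orbitRel.Quotient (Subgroup.zpowers σ) X)

/-- The length `|σ| = card X - #σ` of a permutation. -/
noncomputable def permLength {X : Type*} (σ : Equiv.Perm X) : ℕ :=
  Nat.card X - permCycles σ

/-- A pairing of `X` is a fixed-point-free involution of `X`. -/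
def IsPairing {X : Type*} (α : Equiv.Perm X) : Prop :=
  α * α = 1 ∧ ∀ x, α x ≠ x

/-- A pairing of `Fin q ⊕ Fin q` is transverse if it sends the L side to the R side. -/
def IsTransverse {q : ℕ} (τ : Equiv.Perm (Fin q ⊕ Fin q)) : Prop :=
  ∀ i : Fin q, (τ (Sum.inl i)).isRight

/-- `b_R(β)`: the number of R-side elements paired to R-side elements (twice the
number of bumps of `β`). -/
def bR {q : ℕ} (β : Equiv.Perm (Fin q ⊕ Fin q)) : ℕ :=
  (Finset.univ.filter fun i : Fin q => (β (Sum.inr i)).isRight).card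

/-- The transverse pairing `δ` with `δ (inl i) = inr i`. -/
def deltaPerm (q : ℕ) : Equiv.Perm (Fin q ⊕ Fin q) :=
  Equiv.sumComm (Fin q) (Fin q)

/-!
The length is subadditive, `|σ * τ| ≤ |σ| + |τ|`: the number of cycles `#σ` is the dimension of
the space of `σ`-invariant rational functions on `X`, and a function invariant under `σ` and `τ`
is invariant under `σ * τ`, so `#σ + #τ ≤ card X + #(σ * τ)`. As `α * α = 1`, `δβ = (δα)(αβ)`, and it
remains to see `b_R(β) ≤ |δβ|`: `δβ` sends each R-side `x` with `β x` R-side to the L side, so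
every cycle of `δβ` contains a point outside this set of `b_R(β)` points.
-/

open Module LinearMap Finset

namespace Equiv.Perm

variable {X : Type*}

theorem comp_zpow_eq_self {Y : Type*} {σ : Perm X} {f : X → Y} (hf : f ∘ σ = f) (n : ℤ) :
    f ∘ ⇑(σ ^ n) = f := by
  induction n using Int.induction_on with
  | zero => rfl
  | succ n ih => rw [zpow_add_one, coe_mul, ← Function.comp_assoc, ih, hf]
  | pred n ih =>
    have hinv : f ∘ ⇑σ⁻¹ = f := by
      rw [← hf, Function.comp_assoc, coe_inv, Equiv.self_comp_symm, Function.comp_id, hf]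
    rw [zpow_sub_one, coe_mul, ← Function.comp_assoc, ih, hinv]

theorem mk_apply_eq_mk (σ : Perm X) (x : X) :
    (Quotient.mk'' (σ x) : MulAction.orbitRel.Quotient (Subgroup.zpowers σ) X) =
      Quotient.mk'' x :=
  Quotient.sound ⟨⟨σ, Subgroup.mem_zpowers σ⟩, rfl⟩

end Equiv.Perm

open Equiv Perm

section InvariantFunctions

variable {X : Type*}

def invariantFunctions (σ : Perm X) : Submodule ℚ (X → ℚ) :=
  (funLeft ℚ ℚ σ).eqLocus LinearMap.id

theorem mem_invariantFunctions {σ : Perm X} {f : X → ℚ} :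
    f ∈ invariantFunctions σ ↔ f ∘ σ = f :=
  Iff.rfl

theorem invariantFunctions_eq_range (σ : Perm X) :
    invariantFunctions σ = range (funLeft ℚ ℚ
      (Quotient.mk'' : X → MulAction.orbitRel.Quotient (Subgroup.zpowers σ) X)) := by
  ext f
  constructor
  · intro hf
    refine ⟨Quotient.lift f ?_, rfl⟩
    rintro a b ⟨⟨g, hg⟩, rfl⟩
    obtain ⟨n, rfl⟩ := Subgroup.mem_zpowers_iff.mp hg
    exact congrFun (comp_zpow_eq_self (mem_invariantFunctions.mp hf) n) b
  · rintro ⟨g, rfl⟩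
    funext x
    exact congrArg g (mk_apply_eq_mk σ x)

end InvariantFunctions

section CycleCount

variable {X : Type*} [Fintype X]

theorem permCycles_eq_finrank (σ : Perm X) :
    permCycles σ = finrank ℚ (invariantFunctions σ) := by
  classical
  let _ := Fintype.ofFinite (MulAction.orbitRel.Quotient (Subgroup.zpowers σ) X)
  rw [invariantFunctions_eq_range, finrank_range_of_inj
    (funLeft_injective_of_surjective _ _ _ Quotient.mk''_surjective),
    finrank_fintype_fun_eq_card, permCycles, Nat.card_eq_fintype_card]

theorem permCycles_add_permCycles_le (σ τ : Perm X) :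
    permCycles σ + permCycles τ ≤ Fintype.card X + permCycles (σ * τ) := by
  have hinf : invariantFunctions σ ⊓ invariantFunctions τ ≤ invariantFunctions (σ * τ) := by
    rintro f ⟨hσ : f ∘ σ = f, hτ : f ∘ τ = f⟩
    rw [mem_invariantFunctions, Perm.coe_mul, ← Function.comp_assoc, hσ, hτ]
  have hdim :=
    Submodule.finrank_sup_add_finrank_inf_eq (invariantFunctions σ) (invariantFunctions τ)
  have hsup := Submodule.finrank_le (invariantFunctions σ ⊔ invariantFunctions τ)
  have hmono := Submodule.finrank_mono hinf
  rw [finrank_fintype_fun_eq_card] at hsup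
  rw [permCycles_eq_finrank, permCycles_eq_finrank, permCycles_eq_finrank]
  omega

theorem permLength_mul_le (σ τ : Perm X) :
    permLength (σ * τ) ≤ permLength σ + permLength τ := by
  have := permCycles_add_permCycles_le σ τ
  rw [permLength, permLength, permLength, Nat.card_eq_fintype_card]
  omega

theorem card_le_permLength_of_forall_apply_notMem {σ : Perm X} (s : Finset X)
    (hs : ∀ x ∈ s, σ x ∉ s) : #s ≤ permLength σ := by
  classical
  have hsurj : Function.Surjective fun x : (sᶜ : Finset X) =>
      (Quotient.mk'' x.1 : MulAction.orbitRel.Quotient (Subgroup.zpowers σ) X) := by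
    intro c
    induction c using Quotient.inductionOn' with | h x => ?_
    by_cases hx : x ∈ s
    · exact ⟨⟨σ x, mem_compl.2 (hs x hx)⟩, mk_apply_eq_mk σ x⟩
    · exact ⟨⟨x, mem_compl.2 hx⟩, rfl⟩
  have hcycles : permCycles σ ≤ #sᶜ :=
    (Nat.card_le_card_of_surjective _ hsurj).trans_eq (Nat.card_eq_finsetCard _)
  have := card_le_univ s
  rw [card_compl] at hcycles
  rw [permLength, Nat.card_eq_fintype_card]
  omega

end CycleCount

theorem bR_le_permLength_deltaPerm_mul {q : ℕ} (β : Perm (Fin q ⊕ Fin q)) :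
    bR β ≤ permLength (deltaPerm q * β) := by
  refine (card_map _).symm.trans_le (card_le_permLength_of_forall_apply_notMem
    ((univ.filter fun i => (β (.inr i)).isRight).map Function.Embedding.inr) ?_)
  simp only [mem_map, mem_filter, mem_univ, true_and, Function.Embedding.inr_apply]
  rintro _ ⟨i, hi, rfl⟩ ⟨j, -, hj⟩
  obtain ⟨k, hk⟩ := Sum.isRight_iff.mp hi
  rw [Perm.coe_mul, Function.comp_apply, hk] at hj
  exact Sum.inr_ne_inl hj

theorem stmt10_general (q : ℕ) (α β : Equiv.Perm (Fin q ⊕ Fin q))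
    (hα : IsPairing α) :
    bR β ≤ permLength (deltaPerm q * α) + permLength (α * β) := by
  have hfactor : deltaPerm q * β = (deltaPerm q * α) * (α * β) := by
    rw [mul_assoc, ← mul_assoc α α β, hα.1, one_mul]
  calc bR β ≤ permLength (deltaPerm q * β) := bR_le_permLength_deltaPerm_mul β
    _ = permLength ((deltaPerm q * α) * (α * β)) := by rw [hfactor]
    _ ≤ _ := permLength_mul_le _ _

theorem stmt10 (q : ℕ) (hq : 1 ≤ q) (α β : Equiv.Perm (Fin q ⊕ Fin q))
    (hα : IsPairing α) (hβ : IsPairing β) :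
    bR β ≤ permLength (deltaPerm q * α) + permLength (α * β) :=
  stmt10_general q α β hα
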